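/- arXiv:1308.6086 — 6 statements merged into one kernel-verified Lean document; each statement's English description precedes it below -/
import Mathlib

section
/- Let f have gradient Lipschitz continuous with constant L_f and let L > L_f. If x^{k+1} = H_K(x^k - (1/L)(∇f(x^k) + ε^k)) with x^0 K-sparse, then for all k ≥ 0: f(x^k) - f(x^{k+1}) ≥ ((L - L_f)/2)‖x^k - x^{k+1}‖² - (x^k - x^{k+1})ᵀ ε^k. -/
/-! Since `x` is itself `K`-sparse, the thresholded point `y` is at least as close to the
gradient step `x - (1/L)(∇f(x) + ε)` as `x` is, which after expanding the squares reads
`(L/2)‖y - x‖² + ⟪y - x, ∇f(x) + ε⟫ ≤ 0`. The descent lemma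
`f(y) ≤ f(x) + ⟪∇f(x), y - x⟫ + (L_f/2)‖y - x‖²` turns this into the claimed decrease. -/

noncomputable section

/-- A vector is `K`-sparse if it has at most `K` nonzero entries. -/
def sparse {N : ℕ} (K : ℕ) (x : EuclideanSpace ℝ (Fin N)) : Prop :=
  (Finset.univ.filter fun i => x i ≠ 0).card ≤ K

/-- `IsHT K z x` means `x` is a result of hard thresholding `z`: a `K`-sparse vector
closest to `z` (ties broken arbitrarily). -/
def IsHT {N : ℕ} (K : ℕ) (z x : EuclideanSpace ℝ (Fin N)) : Prop :=
  sparse K x ∧ ∀ v : EuclideanSpace ℝ (Fin N), sparse K v → ‖x - z‖ ≤ ‖v - z‖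

open scoped RealInnerProductSpace

section InnerProductSpace

variable {E : Type*} [NormedAddCommGroup E] [InnerProductSpace ℝ E]

theorem sub_le_inner_gradient_add_half_mul_sq [CompleteSpace E] {f : E → ℝ} {C : ℝ}
    (hf : Differentiable ℝ f)
    (hlip : ∀ x y, ‖gradient f x - gradient f y‖ ≤ C * ‖x - y‖) (x y : E) :
    f y - f x ≤ ⟪gradient f x, y - x⟫ + C / 2 * ‖y - x‖ ^ 2 := by
  set d := y - x
  -- `φ` is `f` on the segment minus its quadratic upper model.
  let φ : ℝ → ℝ := fun t => f (x + t • d) - t * ⟪gradient f x, d⟫ - C / 2 * t ^ 2 * ‖d‖ ^ 2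
  have hφ : ∀ t,
      HasDerivAt φ (⟪gradient f (x + t • d) - gradient f x, d⟫ - C * t * ‖d‖ ^ 2) t := by
    intro t
    have hline : HasDerivAt (fun s : ℝ => x + s • d) d t := by
      simpa using ((hasDerivAt_id t).smul_const d).const_add x
    have hfline := (hf _).hasGradientAt.hasFDerivAt.comp_hasDerivAt t hline
    have hquad := ((hasDerivAt_pow 2 t).const_mul (C / 2)).mul_const (‖d‖ ^ 2)
    refine ((hfline.sub ((hasDerivAt_id t).mul_const ⟪gradient f x, d⟫)).sub hquad).congr_deriv ?_
    rw [InnerProductSpace.toDual_apply_apply, inner_sub_left]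
    push_cast
    ring
  have hφ'_nonpos : ∀ t ∈ interior (Set.Ici (0 : ℝ)),
      ⟪gradient f (x + t • d) - gradient f x, d⟫ - C * t * ‖d‖ ^ 2 ≤ 0 := by
    intro t ht
    rw [interior_Ici, Set.mem_Ioi] at ht
    have hgrad : ‖gradient f (x + t • d) - gradient f x‖ ≤ C * (t * ‖d‖) := by
      simpa [norm_smul, abs_of_pos ht] using hlip (x + t • d) x
    rw [sub_nonpos]
    calc ⟪gradient f (x + t • d) - gradient f x, d⟫
        ≤ ‖gradient f (x + t • d) - gradient f x‖ * ‖d‖ := real_inner_le_norm _ _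
      _ ≤ C * (t * ‖d‖) * ‖d‖ := by gcongr
      _ = C * t * ‖d‖ ^ 2 := by ring
  have hanti : AntitoneOn φ (Set.Ici 0) :=
    antitoneOn_of_hasDerivWithinAt_nonpos (convex_Ici 0)
      (fun t _ => (hφ t).continuousAt.continuousWithinAt)
      (fun t _ => (hφ t).hasDerivWithinAt) hφ'_nonpos
  have h01 : φ 1 ≤ φ 0 := hanti Set.self_mem_Ici (by norm_num) zero_le_one
  simp only [φ, one_smul, zero_smul, add_zero, d, add_sub_cancel] at h01
  linarith

theorem norm_sub_sq_add_two_mul_inner_nonpos {x y u : E} {t : ℝ}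
    (h : ‖y - (x - t • u)‖ ≤ ‖x - (x - t • u)‖) :
    ‖y - x‖ ^ 2 + 2 * t * ⟪y - x, u⟫ ≤ 0 := by
  have hsq : ‖(y - x) + t • u‖ ^ 2 ≤ ‖t • u‖ ^ 2 := by
    rw [sub_sub_cancel, sub_sub_eq_add_sub, add_sub_right_comm] at h
    exact pow_le_pow_left₀ (norm_nonneg _) h 2
  rw [norm_add_sq_real, real_inner_smul_right] at hsq
  linarith

end InnerProductSpace

theorem IsHT.half_mul_norm_sq_add_inner_nonpos {N K : ℕ} {x y u : EuclideanSpace ℝ (Fin N)}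
    {L : ℝ} (hL : 0 < L) (hx : sparse K x) (h : IsHT K (x - (1 / L) • u) y) :
    L / 2 * ‖y - x‖ ^ 2 + ⟪y - x, u⟫ ≤ 0 := by
  have hstep := norm_sub_sq_add_two_mul_inner_nonpos (h.2 x hx)
  calc L / 2 * ‖y - x‖ ^ 2 + ⟪y - x, u⟫
      = L / 2 * (‖y - x‖ ^ 2 + 2 * (1 / L) * ⟪y - x, u⟫) := by field_simp
    _ ≤ 0 := mul_nonpos_of_nonneg_of_nonpos (by positivity) hstep

/-- Sufficient-decrease inequality for inexact IHT: if `∇f` is `L_f`-Lipschitz, `L > L_f`,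
and `x^{k+1} = H_K(x^k - (1/L)(∇f(x^k) + ε^k))` with `x^0` `K`-sparse, then
`f(x^k) - f(x^{k+1}) ≥ ((L-L_f)/2)‖x^k - x^{k+1}‖² - ⟪x^k - x^{k+1}, ε^k⟫`. -/
theorem stmt2 {N : ℕ} (K : ℕ) (f : EuclideanSpace ℝ (Fin N) → ℝ) (Lf L : ℝ)
    (hf : ContDiff ℝ 1 f)
    (hlip : ∀ x y, ‖gradient f x - gradient f y‖ ≤ Lf * ‖x - y‖)
    (hL : Lf < L)
    (x ε : ℕ → EuclideanSpace ℝ (Fin N))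
    (h0 : sparse K (x 0))
    (hit : ∀ k, IsHT K (x k - (1 / L) • (gradient f (x k) + ε k)) (x (k + 1))) :
    ∀ k, f (x k) - f (x (k + 1)) ≥
      (L - Lf) / 2 * ‖x k - x (k + 1)‖ ^ 2 -
        (inner ℝ (x k - x (k + 1)) (ε k) : ℝ) := by
  intro k
  rcases eq_or_ne (x (k + 1)) (x k) with hfix | hmove
  · simp [hfix]
  -- two distinct points force `0 ≤ Lf`, hence `0 < L`
  have hL0 : 0 < L := by
    have hpos : 0 < ‖x (k + 1) - x k‖ := norm_pos_iff.mpr (sub_ne_zero.mpr hmove)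
    have := (norm_nonneg _).trans (hlip (x (k + 1)) (x k))
    linarith [nonneg_of_mul_nonneg_left this hpos]
  have hsparse : ∀ j, sparse K (x j)
    | 0 => h0
    | j + 1 => (hit j).1
  have hstep := (hit k).half_mul_norm_sq_add_inner_nonpos hL0 (hsparse k)
  have hdescent := sub_le_inner_gradient_add_half_mul_sq (hf.differentiable one_ne_zero) hlip
    (x k) (x (k + 1))
  rw [inner_add_right, real_inner_comm] at hstep
  rw [← neg_sub (x (k + 1)), norm_neg, inner_neg_left]
  linarith
end
end

section
/- Suppose f is bounded below by B, ∇f is L_f-Lipschitz, L > L_f, and the sequence x^{k+1} = H_K(x^k - (1/L)(∇f(x^k)+ε^k)) starts from a K-sparse x^0 with Σ_{k≥0}‖ε^k‖² = E < ∞. Then there exists D < ∞ with Σ_{k=0}^T ‖x^k - x^{k+1}‖² ≤ D for all T ≥ 0. -/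
/-!
Since `x^k` is itself `K`-sparse, the hard-thresholding step is at least as close to
`z = x^k - (∇f(x^k) + ε^k)/L` as `x^k` is, which gives `⟪Δ, ∇f(x^k) + ε^k⟫ ≤ -(L/2)‖Δ‖²` for
`Δ = x^{k+1} - x^k`. Combined with the descent lemma for the `L_f`-smooth `f` and
`‖ε‖‖Δ‖ ≤ (c/4)‖Δ‖² + ‖ε‖²/c` with `c = L - L_f`, this is the sufficient decrease
`(c/4)‖Δ‖² ≤ f(x^k) - f(x^{k+1}) + ‖ε^k‖²/c`. Summing telescopes, and `f ≥ B` bounds the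
partial sums by `(4/c)(f(x^0) - B + E/c)`.
-/

noncomputable section

open scoped RealInnerProductSpace

theorem nonneg_of_norm_sub_le_mul_norm_sub {E F : Type*} [NormedAddCommGroup E] [Nontrivial E]
    [SeminormedAddCommGroup F] {g : E → F} {Lf : ℝ}
    (hg : ∀ x y, ‖g x - g y‖ ≤ Lf * ‖x - y‖) : 0 ≤ Lf := by
  obtain ⟨x, hx⟩ := exists_ne (0 : E)
  exact nonneg_of_mul_nonneg_left ((norm_nonneg _).trans (hg x 0)) (by simpa using hx)

section InnerProductSpace

variable {E : Type*} [NormedAddCommGroup E] [InnerProductSpace ℝ E]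

theorem descent_lemma [CompleteSpace E] {f : E → ℝ} {Lf : ℝ} (hf : Differentiable ℝ f)
    (hlip : ∀ x y, ‖gradient f x - gradient f y‖ ≤ Lf * ‖x - y‖) (a b : E) :
    f b ≤ f a + ⟪gradient f a, b - a⟫ + Lf / 2 * ‖b - a‖ ^ 2 := by
  set v := b - a
  set φ : ℝ → ℝ := fun t => f (a + t • v) - t * ⟪gradient f a, v⟫ - Lf / 2 * t ^ 2 * ‖v‖ ^ 2
  have hφ : ∀ t, HasDerivAt φ
      (⟪gradient f (a + t • v), v⟫ - ⟪gradient f a, v⟫ - Lf * t * ‖v‖ ^ 2) t := by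
    intro t
    have hline : HasDerivAt (fun t : ℝ => a + t • v) v t := by
      simpa using ((hasDerivAt_id t).smul_const v).const_add a
    have hcomp := (hf (a + t • v)).hasGradientAt.hasFDerivAt.comp_hasDerivAt t hline
    rw [InnerProductSpace.toDual_apply_apply] at hcomp
    refine ((hcomp.sub ((hasDerivAt_id t).mul_const ⟪gradient f a, v⟫)).sub
      ((((hasDerivAt_id t).pow 2).const_mul (Lf / 2)).mul_const (‖v‖ ^ 2))).congr_deriv ?_
    simp only [id, one_mul, mul_one, Nat.cast_ofNat]
    ring
  have hφ' : ∀ t ∈ interior (Set.Ici (0 : ℝ)),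
      ⟪gradient f (a + t • v), v⟫ - ⟪gradient f a, v⟫ - Lf * t * ‖v‖ ^ 2 ≤ 0 := by
    intro t ht
    rw [sub_nonpos]
    rw [interior_Ici, Set.mem_Ioi] at ht
    have hgrad := hlip (a + t • v) a
    rw [add_sub_cancel_left, norm_smul, Real.norm_eq_abs, abs_of_pos ht] at hgrad
    calc ⟪gradient f (a + t • v), v⟫ - ⟪gradient f a, v⟫
        = ⟪gradient f (a + t • v) - gradient f a, v⟫ := (inner_sub_left _ _ _).symm
      _ ≤ ‖gradient f (a + t • v) - gradient f a‖ * ‖v‖ := real_inner_le_norm _ _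
      _ ≤ Lf * (t * ‖v‖) * ‖v‖ := by gcongr
      _ = Lf * t * ‖v‖ ^ 2 := by ring
  have hanti : AntitoneOn φ (Set.Ici 0) :=
    antitoneOn_of_hasDerivWithinAt_nonpos (convex_Ici 0)
      (fun t _ => (hφ t).continuousAt.continuousWithinAt)
      (fun t _ => (hφ t).hasDerivWithinAt) hφ'
  have hφ01 := hanti (Set.mem_Ici.mpr le_rfl) (Set.mem_Ici.mpr zero_le_one) zero_le_one
  simp only [φ, v, one_smul, zero_smul, add_zero, add_sub_cancel] at hφ01
  linarith

theorem sufficient_decrease {fa fb Lf L : ℝ} {g e Δ : E} (hL : Lf < L)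
    (hdesc : fb ≤ fa + ⟪g, Δ⟫ + Lf / 2 * ‖Δ‖ ^ 2)
    (hstep : ⟪Δ, g + e⟫ ≤ -(L / 2) * ‖Δ‖ ^ 2) :
    (L - Lf) / 4 * ‖Δ‖ ^ 2 ≤ fa - fb + (L - Lf)⁻¹ * ‖e‖ ^ 2 := by
  set c := L - Lf
  have hc : 0 < c := sub_pos.mpr hL
  have hsplit : ⟪g, Δ⟫ = ⟪Δ, g + e⟫ - ⟪Δ, e⟫ := by
    rw [inner_add_right, real_inner_comm]
    ring
  have hcs : -(‖Δ‖ * ‖e‖) ≤ ⟪Δ, e⟫ := (abs_le.mp (abs_real_inner_le_norm Δ e)).1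
  have hamgm : ‖Δ‖ * ‖e‖ ≤ c / 4 * ‖Δ‖ ^ 2 + c⁻¹ * ‖e‖ ^ 2 := by
    have hsq : c / 4 * ‖Δ‖ ^ 2 + c⁻¹ * ‖e‖ ^ 2 - ‖Δ‖ * ‖e‖ = c⁻¹ * (c / 2 * ‖Δ‖ - ‖e‖) ^ 2 := by
      field_simp
      ring
    rw [← sub_nonneg, hsq]
    positivity
  linarith

end InnerProductSpace

theorem sum_range_le_of_le_sub_add {u d s : ℕ → ℝ} {B c r : ℝ} (hc : 0 < c) (hr : 0 ≤ r)
    (hu : ∀ k, B ≤ u k) (hs : ∀ k, 0 ≤ s k) (hsum : Summable s)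
    (hstep : ∀ k, c * d k ≤ u k - u (k + 1) + r * s k) (n : ℕ) :
    ∑ k ∈ Finset.range n, d k ≤ (u 0 - B + r * ∑' k, s k) / c := by
  rw [le_div_iff₀ hc, Finset.sum_mul]
  calc ∑ k ∈ Finset.range n, d k * c
      ≤ ∑ k ∈ Finset.range n, (u k - u (k + 1) + r * s k) :=
        Finset.sum_le_sum fun k _ => (mul_comm (d k) c).trans_le (hstep k)
    _ = u 0 - u n + r * ∑ k ∈ Finset.range n, s k := by
        rw [Finset.sum_add_distrib, Finset.sum_range_sub', Finset.mul_sum]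
    _ ≤ u 0 - B + r * ∑' k, s k := by
        gcongr
        · exact hu n
        · exact hsum.sum_le_tsum _ fun k _ => hs k

theorem IsHT.inner_sub_le {N K : ℕ} {L : ℝ} (hL : 0 < L) {a b w : EuclideanSpace ℝ (Fin N)}
    (hb : IsHT K (a - (1 / L) • w) b) (ha : sparse K a) :
    ⟪b - a, w⟫ ≤ -(L / 2) * ‖b - a‖ ^ 2 := by
  have hclose := hb.2 a ha
  rw [show b - (a - (1 / L) • w) = (b - a) + (1 / L) • w by abel,
    show a - (a - (1 / L) • w) = (1 / L) • w by abel] at hclose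
  have hsq := pow_le_pow_left₀ (norm_nonneg _) hclose 2
  rw [norm_add_sq_real, real_inner_smul_right] at hsq
  have hscaled : 2 * (1 / L * ⟪b - a, w⟫) ≤ -‖b - a‖ ^ 2 := by linarith
  have hmul := mul_le_mul_of_nonneg_left hscaled hL.le
  rw [mul_left_comm, ← mul_assoc L, mul_one_div_cancel hL.ne', one_mul] at hmul
  linarith

/-- Boundedness of partial sums of squared differences of inexact IHT iterates:
if `f` is bounded below by `B`, `∇f` is `L_f`-Lipschitz, `L > L_f`, the errors are
square-summable with sum `E`, then there is `D < ∞` bounding all partial sums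
`Σ_{k=0}^T ‖x^k - x^{k+1}‖²`. -/
theorem stmt4 {N : ℕ} (K : ℕ) (f : EuclideanSpace ℝ (Fin N) → ℝ) (B Lf L E : ℝ)
    (hf : ContDiff ℝ 1 f)
    (hB : ∀ y, B ≤ f y)
    (hlip : ∀ x y, ‖gradient f x - gradient f y‖ ≤ Lf * ‖x - y‖)
    (hL : Lf < L)
    (x ε : ℕ → EuclideanSpace ℝ (Fin N))
    (h0 : sparse K (x 0))
    (hit : ∀ k, IsHT K (x k - (1 / L) • (gradient f (x k) + ε k)) (x (k + 1)))
    (hsum : Summable fun k => ‖ε k‖ ^ 2)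
    (hE : ∑' k, ‖ε k‖ ^ 2 = E) :
    ∃ D : ℝ, ∀ T : ℕ, ∑ k ∈ Finset.range (T + 1), ‖x k - x (k + 1)‖ ^ 2 ≤ D := by
  -- In dimension zero `hlip` says nothing about `Lf`, so `0 < L` is only available otherwise.
  rcases subsingleton_or_nontrivial (EuclideanSpace ℝ (Fin N)) with _ | _
  · exact ⟨0, fun T => (Finset.sum_eq_zero fun k _ => by
      simp [Subsingleton.elim (x k) (x (k + 1))]).le⟩
  have hLpos : 0 < L := (nonneg_of_norm_sub_le_mul_norm_sub hlip).trans_lt hL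
  have hsparse : ∀ k, sparse K (x k) := fun k => Nat.rec h0 (fun n _ => (hit n).1) k
  have hdecrease : ∀ k, (L - Lf) / 4 * ‖x k - x (k + 1)‖ ^ 2
      ≤ f (x k) - f (x (k + 1)) + (L - Lf)⁻¹ * ‖ε k‖ ^ 2 := fun k => by
    rw [norm_sub_rev]
    exact sufficient_decrease hL (descent_lemma (hf.differentiable one_ne_zero) hlip _ _)
      ((hit k).inner_sub_le hLpos (hsparse k))
  refine ⟨(f (x 0) - B + (L - Lf)⁻¹ * E) / ((L - Lf) / 4), fun T => ?_⟩
  rw [← hE]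
  exact sum_range_le_of_le_sub_add (by linarith) (inv_nonneg.mpr (by linarith)) (fun k => hB _)
    (fun k => sq_nonneg _) hsum hdecrease _
end
end

section
/- Let f(x) = ‖Ax - b‖₂² with spark(A) > K (any K columns of A are linearly independent). Then for any c ∈ R, the intersection of the sublevel set {x : f(x) ≤ c} with the set of K-sparse vectors is bounded. -/
/-!
A `K`-sparse vector is supported on some set `S` of at most `K` coordinates. Because the
columns of `A` indexed by `S` are linearly independent, `A` is injective on the subspace of
vectors supported on `S`, hence anti-Lipschitz there (finite dimension), so the vectors of that
subspace with `‖Ax - b‖ ≤ √c` form a bounded set. There are finitely many supports.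
-/

noncomputable section

open Bornology

def supportedOn (𝕜 : Type*) {n : Type*} [RCLike 𝕜] (S : Set n) :
    Submodule 𝕜 (EuclideanSpace 𝕜 n) where
  carrier := {x | ∀ i ∉ S, x i = 0}
  add_mem' hx hy i hi := by simp [hx i hi, hy i hi]
  zero_mem' _ _ := rfl
  smul_mem' c x hx i hi := by simp [hx i hi]

theorem LinearMap.isBounded_inter_preimage_of_disjoint_ker {𝕜 E F : Type*}
    [NontriviallyNormedField 𝕜] [CompleteSpace 𝕜]
    [NormedAddCommGroup E] [NormedSpace 𝕜 E] [FiniteDimensional 𝕜 E]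
    [NormedAddCommGroup F] [NormedSpace 𝕜 F]
    (f : E →ₗ[𝕜] F) {V : Submodule 𝕜 E} (hV : Disjoint V (LinearMap.ker f)) {s : Set F}
    (hs : IsBounded s) : IsBounded ((V : Set E) ∩ f ⁻¹' s) := by
  have hker : LinearMap.ker (f ∘ₗ V.subtype) = ⊥ := by
    rw [LinearMap.ker_comp]
    exact Submodule.disjoint_iff_comap_eq_bot.mp hV
  obtain ⟨C, -, hC⟩ := (f ∘ₗ V.subtype).exists_antilipschitzWith hker
  have hbdd := (LipschitzWith.subtype_val (V : Set E)).isBounded_image (hC.isBounded_preimage hs)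
  convert hbdd using 1
  ext x
  simp [and_comm]

namespace Matrix

theorem eq_zero_of_mulVec_eq_zero_of_linearIndependent_cols {m n R : Type*} [Fintype n]
    [CommRing R] (A : Matrix m n R) {S : Finset n}
    (hA : LinearIndependent R fun j : S => Aᵀ j) {x : n → R} (hx : ∀ i ∉ S, x i = 0)
    (h : A *ᵥ x = 0) : x = 0 := by
  have hsum : ∑ j : S, x j • Aᵀ j = 0 := by
    rw [Finset.sum_coe_sort S fun j => x j • Aᵀ j,
      Finset.sum_subset (Finset.subset_univ S) fun i _ hi => by simp [hx i hi], ← h,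
      mulVec_eq_sum]
    simp only [op_smul_eq_smul]
  funext i
  by_cases hi : i ∈ S
  · exact Fintype.linearIndependent_iff.mp hA (fun j : S => x j) hsum ⟨i, hi⟩
  · exact hx i hi

theorem disjoint_supportedOn_ker_toEuclideanLin {𝕜 m n : Type*} [RCLike 𝕜] [Fintype n]
    [DecidableEq n] (A : Matrix m n 𝕜) {S : Finset n}
    (hA : LinearIndependent 𝕜 fun j : S => Aᵀ j) :
    Disjoint (supportedOn 𝕜 (S : Set n)) (LinearMap.ker (toEuclideanLin A)) := by
  rw [Submodule.disjoint_def]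
  intro x hxS hx
  have hAx : A *ᵥ x.ofLp = 0 := congrArg WithLp.ofLp hx
  simpa using A.eq_zero_of_mulVec_eq_zero_of_linearIndependent_cols hA hxS hAx

end Matrix

open Matrix in
/-- If `spark(A) > K` (any `K` columns of `A` are linearly independent), then for any `c`,
the intersection of the sublevel set `{x : ‖Ax - b‖² ≤ c}` with the `K`-sparse vectors
is bounded. -/
theorem stmt9 {M N : ℕ} (A : Matrix (Fin M) (Fin N) ℝ) (b : EuclideanSpace ℝ (Fin M))
    (K : ℕ)
    (hspark : ∀ S : Finset (Fin N), S.card ≤ K →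
      LinearIndependent ℝ (fun j : S => Aᵀ (j : Fin N))) :
    ∀ c : ℝ, Bornology.IsBounded
      {x : EuclideanSpace ℝ (Fin N) |
        ‖Matrix.toEuclideanLin A x - b‖ ^ 2 ≤ c ∧ sparse K x} := by
  intro c
  have hcover : {x : EuclideanSpace ℝ (Fin N) |
        ‖Matrix.toEuclideanLin A x - b‖ ^ 2 ≤ c ∧ sparse K x} ⊆
      ⋃ S ∈ {S : Finset (Fin N) | S.card ≤ K},
        (supportedOn ℝ (S : Set (Fin N)) : Set _) ∩
          toEuclideanLin A ⁻¹' Metric.closedBall b √c := by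
    rintro x ⟨hxc, hxK⟩
    refine Set.mem_biUnion (x := Finset.univ.filter fun i => x i ≠ 0) hxK ⟨?_, ?_⟩
    · intro i hi
      simpa using hi
    · rw [Set.mem_preimage, Metric.mem_closedBall, dist_eq_norm]
      exact Real.le_sqrt_of_sq_le hxc
  refine ((isBounded_biUnion (Set.toFinite _)).mpr fun S hS => ?_).subset hcover
  exact (toEuclideanLin A).isBounded_inter_preimage_of_disjoint_ker
    (disjoint_supportedOn_ker_toEuclideanLin A (hspark S hS)) Metric.isBounded_closedBall
end
end

section
/- Let f(x) = ‖Ax-b‖₂² with spark(A) > K, and let {x^k} be generated by inexact IHT with L > 2λ_max(AᵀA) and errors satisfying Σ_{k≥0}‖ε^k‖² < ∞. Then the sequence {x^k} converges to an L-stationary point of the problem minimize ‖Ax-b‖₂² subject to ‖x‖₀ ≤ K. -/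
/-!
The objective `f y = ‖T y - b‖²` is an exact quadratic, so the hard-thresholding step, compared
with the feasible competitor `x k`, gives the sufficient decrease
`f (x (k+1)) + c/2 ‖x (k+1) - x k‖² ≤ f (x k) + ‖ε k‖² / (2c)` with `c = L/2 - λ`.
Summing, the steps are square summable and `f (x k)` is bounded; since `T` is injective on
`K`-sparse vectors (spark condition), `f` is coercive on them, so the iterates are bounded.
Every cluster point is `L`-stationary, hence is the unique zero of the gradient on its own
support: there are finitely many of them. A bounded sequence with vanishing steps whose cluster
points lie in a finite set converges.
-/

noncomputable section

open Filter Topology Matrix Module.End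

section LeastSquares

variable {E F : Type*} [NormedAddCommGroup E] [InnerProductSpace ℝ E] [FiniteDimensional ℝ E]
  [NormedAddCommGroup F] [InnerProductSpace ℝ F] [FiniteDimensional ℝ F] (T : E →ₗ[ℝ] F) (b : F)

theorem hasGradientAt_norm_apply_sub_sq (x : E) :
    HasGradientAt (fun y => ‖T y - b‖ ^ 2) ((2 : ℝ) • LinearMap.adjoint T (T x - b)) x := by
  have hT := (LinearMap.toContinuousLinearMap T).hasFDerivAt (x := x)
  rw [hasGradientAt_iff_hasFDerivAt]
  refine (hT.sub_const b).norm_sq.congr_fderiv ?_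
  ext h
  simp [LinearMap.adjoint_inner_left]

theorem gradient_norm_apply_sub_sq (x : E) :
    gradient (fun y => ‖T y - b‖ ^ 2) x = (2 : ℝ) • LinearMap.adjoint T (T x - b) :=
  (hasGradientAt_norm_apply_sub_sq T b x).gradient

theorem continuous_gradient_norm_apply_sub_sq :
    Continuous (gradient fun y => ‖T y - b‖ ^ 2) := by
  simp_rw [funext (gradient_norm_apply_sub_sq T b)]
  have := T.continuous_of_finiteDimensional
  have := (LinearMap.adjoint T).continuous_of_finiteDimensional
  fun_prop

theorem norm_apply_sub_sq_eq_add_inner_gradient (u v : E) :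
    ‖T v - b‖ ^ 2 = ‖T u - b‖ ^ 2 + inner ℝ (gradient (fun y => ‖T y - b‖ ^ 2) u) (v - u)
      + ‖T (v - u)‖ ^ 2 := by
  rw [gradient_norm_apply_sub_sq, real_inner_smul_left, LinearMap.adjoint_inner_left, map_sub,
    ← norm_add_sq_real]
  congr 2
  abel

end LeastSquares

section Rayleigh

variable {E : Type*} [NormedAddCommGroup E] [InnerProductSpace ℝ E]

theorem LinearMap.IsSymmetric.inner_apply_self_le [FiniteDimensional ℝ E] {S : E →ₗ[ℝ] E}
    (hS : S.IsSymmetric) {lam : ℝ} (hlam : ∀ μ, HasEigenvalue S μ → μ ≤ lam) (u : E) :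
    inner ℝ (S u) u ≤ lam * ‖u‖ ^ 2 := by
  rcases eq_or_ne u 0 with rfl | hu
  · simp
  have : Nontrivial E := ⟨⟨u, 0, hu⟩⟩
  have hbdd : BddAbove (Set.range fun v : {v : E // v ≠ 0} =>
      RCLike.re (inner ℝ (S v) v) / ‖(v : E)‖ ^ 2) :=
    ((LinearMap.toContinuousLinearMap S).bddAbove_rayleighQuotient.mono
      (Set.range_comp_subset_range Subtype.val _)).range_mono _ fun _ => le_abs_self _
  have hq := (le_ciSup hbdd ⟨u, hu⟩).trans (hlam _ hS.hasEigenvalue_iSup_of_finiteDimensional)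
  rwa [RCLike.re_to_real, div_le_iff₀ (by positivity)] at hq

theorem LinearMap.IsPositive.nonneg_of_hasEigenvalue {S : E →ₗ[ℝ] E} (hS : S.IsPositive)
    {μ : ℝ} (hμ : HasEigenvalue S μ) : 0 ≤ μ := by
  obtain ⟨v, hv⟩ := hμ.exists_hasEigenvector
  have := hS.inner_nonneg_left v
  rw [hv.apply_eq_smul, real_inner_smul_left, real_inner_self_eq_norm_sq] at this
  exact nonneg_of_mul_nonneg_left this (by have := hv.2; positivity)

end Rayleigh

theorem mul_le_div_two_mul_sq_add_sq_div (a b : ℝ) {c : ℝ} (hc : 0 < c) :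
    a * b ≤ c / 2 * b ^ 2 + a ^ 2 / (2 * c) := by
  have : c / 2 * b ^ 2 + a ^ 2 / (2 * c) - a * b = (c * b - a) ^ 2 / (2 * c) := by
    field_simp
    ring
  linarith [show 0 ≤ (c * b - a) ^ 2 / (2 * c) by positivity]

theorem tendsto_zero_of_summable_norm_sq {E : Type*} [SeminormedAddCommGroup E] {u : ℕ → E}
    (hu : Summable fun k => ‖u k‖ ^ 2) : Tendsto u atTop (𝓝 0) := by
  rw [tendsto_zero_iff_norm_tendsto_zero]
  simpa using hu.tendsto_atTop_zero.sqrt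

theorem summable_and_bddAbove_of_add_le_add {a d e : ℕ → ℝ} (ha : ∀ k, 0 ≤ a k)
    (hd : ∀ k, 0 ≤ d k) (he : Summable e) (he0 : ∀ k, 0 ≤ e k)
    (h : ∀ k, a (k + 1) + d k ≤ a k + e k) : Summable d ∧ BddAbove (Set.range a) := by
  have hpartial (n : ℕ) :
      a n + ∑ k ∈ Finset.range n, d k ≤ a 0 + ∑ k ∈ Finset.range n, e k := by
    induction n with
    | zero => simp
    | succ n ih => simp only [Finset.sum_range_succ]; linarith [h n]
  have hsum (n : ℕ) : ∑ k ∈ Finset.range n, e k ≤ ∑' k, e k :=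
    he.sum_le_tsum _ fun k _ => he0 k
  refine ⟨summable_of_sum_range_le (c := a 0 + ∑' k, e k) hd fun n => ?_,
    ⟨a 0 + ∑' k, e k, ?_⟩⟩
  · linarith [hpartial n, hsum n, ha n]
  · rintro _ ⟨n, rfl⟩
    linarith [hpartial n, hsum n, Finset.sum_nonneg fun k (_ : k ∈ Finset.range n) => hd k]

theorem inner_le_of_norm_sub_le {E : Type*} [NormedAddCommGroup E] [InnerProductSpace ℝ E]
    {L : ℝ} (hL : 0 < L) {u y w : E}
    (h : ‖y - (u - (1 / L) • w)‖ ≤ ‖u - (u - (1 / L) • w)‖) :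
    inner ℝ w (y - u) ≤ -(L / 2) * ‖y - u‖ ^ 2 := by
  rw [sub_sub_cancel, sub_sub_eq_add_sub, add_sub_right_comm] at h
  have := pow_le_pow_left₀ (norm_nonneg _) h 2
  rw [norm_add_sq_real, real_inner_smul_right, real_inner_comm] at this
  have : L * ‖y - u‖ ^ 2 + 2 * inner ℝ w (y - u) ≤ 0 := by
    field_simp at this
    nlinarith
  linarith

theorem exists_pos_mul_norm_le_of_isClosed_of_smul_mem {E F : Type*} [NormedAddCommGroup E]
    [NormedSpace ℝ E] [FiniteDimensional ℝ E] [NormedAddCommGroup F] [NormedSpace ℝ F]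
    (T : E →ₗ[ℝ] F) {C : Set E} (hC : IsClosed C) (hsmul : ∀ c : ℝ, ∀ u ∈ C, c • u ∈ C)
    (hker : ∀ u ∈ C, T u = 0 → u = 0) : ∃ α > 0, ∀ u ∈ C, α * ‖u‖ ≤ ‖T u‖ := by
  obtain ⟨α, hα, hmin⟩ := ((isCompact_sphere (0 : E) 1).inter_left hC).exists_forall_le'
    (T.continuous_of_finiteDimensional.norm.continuousOn) (a := 0) fun u ⟨huC, hu⟩ =>
      norm_pos_iff.2 fun h => by simp [hker u huC h] at hu
  refine ⟨α, hα, fun u hu => ?_⟩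
  rcases eq_or_ne u 0 with rfl | hu0
  · simp
  have := hmin (‖u‖⁻¹ • u) ⟨hsmul _ u hu, by simp [norm_smul, hu0]⟩
  rwa [map_smul, norm_smul, norm_inv, norm_norm, le_inv_mul_iff₀ (norm_pos_iff.2 hu0),
    mul_comm] at this

section Metric

variable {X : Type*} [MetricSpace X] {x : ℕ → X}

theorem exists_tendsto_of_eventually_exists_dist_lt {P : Set X} (hP : P.Finite)
    (hnear : ∀ η > 0, ∀ᶠ k in atTop, ∃ p ∈ P, dist (x k) p < η)
    (hstep : Tendsto (fun k => dist (x (k + 1)) (x k)) atTop (𝓝 0)) :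
    ∃ p ∈ P, Tendsto x atTop (𝓝 p) := by
  obtain ⟨δ, hδ, hsep⟩ : ∃ δ > 0, ∀ p ∈ P, ∀ q ∈ P, dist p q < δ → p = q := by
    have : ∀ᶠ δ in 𝓝[>] (0 : ℝ), ∀ p ∈ P, ∀ q ∈ P, dist p q < δ → p = q := by
      refine (eventually_all_finite hP).2 fun p _ => (eventually_all_finite hP).2 fun q _ => ?_
      rcases eq_or_ne p q with rfl | hpq
      · exact Eventually.of_forall fun _ _ => rfl
      · filter_upwards [Ioo_mem_nhdsGT (dist_pos.2 hpq)] with δ hδ h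
        exact absurd h (not_lt.2 hδ.2.le)
    exact (this.and self_mem_nhdsWithin).exists.imp fun δ h => ⟨h.2, h.1⟩
  -- Once the steps are shorter than `δ / 3`, the point of `P` near `x k` can no longer change.
  obtain ⟨k₀, hk₀⟩ := eventually_atTop.1 <| (hnear (δ / 3) (by positivity)).and
    (hstep.eventually (gt_mem_nhds (show (0 : ℝ) < δ / 3 by positivity)))
  have : Nonempty X := ⟨x 0⟩
  choose! p hpP hp using fun k (hk : k₀ ≤ k) => (hk₀ k hk).1
  have hconst (k : ℕ) (hk : k₀ ≤ k) : p k = p k₀ := by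
    induction k, hk using Nat.le_induction with
    | base => rfl
    | succ k hk ih =>
      refine (hsep _ (hpP _ (by omega)) _ (hpP k hk) ?_).trans ih
      calc dist (p (k + 1)) (p k)
          ≤ dist (x (k + 1)) (p (k + 1)) + dist (x (k + 1)) (x k) + dist (x k) (p k) := by
            linarith [dist_triangle4 (p (k + 1)) (x (k + 1)) (x k) (p k),
              dist_comm (p (k + 1)) (x (k + 1))]
        _ < δ := by linarith [hp (k + 1) (by omega), (hk₀ k hk).2, hp k hk]
  refine ⟨p k₀, hpP k₀ le_rfl, Metric.tendsto_nhds.2 fun η hη => ?_⟩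
  filter_upwards [hnear (min η (δ / 3)) (by positivity), eventually_ge_atTop k₀]
    with k ⟨q, hqP, hq⟩ hk
  have hqk : q = p k₀ := by
    refine hsep _ hqP _ (hpP k₀ le_rfl) ?_
    rw [← hconst k hk]
    linarith [dist_triangle_left q (p k) (x k), hp k hk, min_le_right η (δ / 3)]
  exact hqk ▸ hq.trans_le (min_le_left _ _)

theorem eventually_exists_dist_lt_of_mapClusterPt [ProperSpace X]
    (hx : Bornology.IsBounded (Set.range x)) {P : Set X}
    (hP : ∀ y, MapClusterPt y atTop x → y ∈ P) {η : ℝ} (hη : 0 < η) :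
    ∀ᶠ k in atTop, ∃ p ∈ P, dist (x k) p < η := by
  by_contra h
  obtain ⟨φ, hφ, hfar⟩ := extraction_of_frequently_atTop (not_eventually.1 h)
  obtain ⟨y, -, ψ, hψ, hy⟩ := tendsto_subseq_of_bounded hx fun n => Set.mem_range_self (φ n)
  have hcl : MapClusterPt y atTop x := hy.mapClusterPt.of_comp (hφ.comp hψ).tendsto_atTop
  obtain ⟨n, hn⟩ := (Metric.tendsto_nhds.1 hy η hη).exists
  exact hfar (ψ n) ⟨y, hP y hcl, hn⟩

end Metric

section Sparse

variable {N K : ℕ}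

theorem sparse_iff_exists_support_subset {u : EuclideanSpace ℝ (Fin N)} :
    sparse K u ↔ ∃ S : Finset (Fin N), S.card ≤ K ∧ ∀ i ∉ S, u i = 0 := by
  refine ⟨fun hu => ⟨_, hu, fun i hi => ?_⟩, fun ⟨S, hS, hu⟩ => ?_⟩
  · simpa using hi
  · refine (Finset.card_le_card fun i hi => ?_).trans hS
    by_contra h
    exact (Finset.mem_filter.1 hi).2 (hu i h)

theorem sparse_of_support_subset {u v : EuclideanSpace ℝ (Fin N)} (hu : sparse K u)
    (h : ∀ i, u i = 0 → v i = 0) : sparse K v :=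
  sparse_iff_exists_support_subset.2 <| by
    obtain ⟨S, hS, hu⟩ := sparse_iff_exists_support_subset.1 hu
    exact ⟨S, hS, fun i hi => h i (hu i hi)⟩

theorem sparse.smul {u : EuclideanSpace ℝ (Fin N)} (hu : sparse K u) (c : ℝ) :
    sparse K (c • u) :=
  sparse_of_support_subset hu fun i hi => by simp [hi]

theorem isClosed_setOf_sparse : IsClosed {u : EuclideanSpace ℝ (Fin N) | sparse K u} := by
  simp_rw [sparse_iff_exists_support_subset, Set.ofPred_exists]
  refine isClosed_iUnion_of_finite fun S => ?_
  simp_rw [Set.ofPred_and, Set.ofPred_forall]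
  refine isClosed_const.inter (isClosed_iInter fun i => isClosed_iInter fun _ => ?_)
  exact isClosed_eq (by fun_prop) continuous_const

theorem sparse.eq_zero_of_toEuclideanLin_apply_eq_zero {M : ℕ} {A : Matrix (Fin M) (Fin N) ℝ}
    {u : EuclideanSpace ℝ (Fin N)} (hu : sparse K u)
    (hspark : ∀ S : Finset (Fin N), S.card ≤ K →
      LinearIndependent ℝ (fun j : S => Aᵀ (j : Fin N)))
    (hAu : Matrix.toEuclideanLin A u = 0) : u = 0 := by
  set S := Finset.univ.filter fun i => u i ≠ 0
  have hsum : ∑ j : S, u j • Aᵀ j = 0 := by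
    ext m
    have := congrArg (· m) hAu
    simp only [Matrix.toLpLin_apply, Matrix.mulVec, dotProduct, WithLp.ofLp_zero,
      Pi.zero_apply] at this
    simp only [Finset.univ_eq_attach, Finset.sum_apply, Pi.smul_apply, transpose_apply,
      smul_eq_mul, Pi.zero_apply]
    rw [Finset.sum_attach S fun i => u i * A m i, Finset.sum_filter_of_ne, ← this]
    · simp only [mul_comm]
    · exact fun i _ h => left_ne_zero_of_mul h
  have := Fintype.linearIndependent_iff.1 (hspark S hu) _ hsum
  ext i
  by_contra hi
  exact hi (this ⟨i, by simpa [S] using hi⟩)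

theorem isBounded_setOf_sparse_norm_apply_sub_sq_le {F : Type*} [NormedAddCommGroup F]
    [NormedSpace ℝ F] (T : EuclideanSpace ℝ (Fin N) →ₗ[ℝ] F) (b : F)
    (hker : ∀ u, sparse K u → T u = 0 → u = 0) (B : ℝ) :
    Bornology.IsBounded {u | sparse K u ∧ ‖T u - b‖ ^ 2 ≤ B} := by
  obtain ⟨α, hα, hlow⟩ := exists_pos_mul_norm_le_of_isClosed_of_smul_mem T
    isClosed_setOf_sparse (fun c u hu => sparse.smul hu c) hker
  refine isBounded_iff_forall_norm_le.2 ⟨(1 + B + ‖b‖) / α, fun u ⟨hu, hB⟩ => ?_⟩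
  rw [le_div_iff₀ hα, mul_comm]
  have hTu : ‖T u‖ ≤ ‖T u - b‖ + ‖b‖ := norm_le_norm_sub_add _ _
  nlinarith [hlow u hu, sq_nonneg (‖T u - b‖ - 1)]

theorem IsHT.of_tendsto {l : Filter ℕ} [l.NeBot] {z x : ℕ → EuclideanSpace ℝ (Fin N)}
    {z₀ x₀ : EuclideanSpace ℝ (Fin N)} (h : ∀ n, IsHT K (z n) (x n))
    (hz : Tendsto z l (𝓝 z₀)) (hx : Tendsto x l (𝓝 x₀)) : IsHT K z₀ x₀ :=
  ⟨isClosed_setOf_sparse.mem_of_tendsto hx (Eventually.of_forall fun n => (h n).1),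
    fun v hv => le_of_tendsto_of_tendsto' (hx.sub hz).norm (tendsto_const_nhds.sub hz).norm
      fun n => (h n).2 v hv⟩

theorem IsHT.apply_eq_of_ne_zero {z y : EuclideanSpace ℝ (Fin N)} (h : IsHT K z y)
    {i : Fin N} (hi : y i ≠ 0) : y i = z i := by
  -- Moving `y i` to `z i` keeps the support and lowers `‖y - z‖²` by `t²`.
  set t := y i - z i
  have hv : sparse K (y - t • EuclideanSpace.single i 1) :=
    sparse_of_support_subset h.1 fun j hj => by
      have : j ≠ i := by rintro rfl; exact hi hj
      simp [hj, this]
  have key : ‖y - t • EuclideanSpace.single i 1 - z‖ ^ 2 = ‖y - z‖ ^ 2 - t ^ 2 := by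
    rw [sub_right_comm, norm_sub_sq_real, real_inner_smul_right, real_inner_comm,
      EuclideanSpace.inner_single_left, norm_smul, PiLp.norm_single]
    simp only [Real.ringHom_apply, PiLp.sub_apply, one_mul, Real.norm_eq_abs, norm_one,
      mul_one, sq_abs, t]
    ring
  have := pow_le_pow_left₀ (norm_nonneg _) (h.2 _ hv) 2
  have : t = 0 := by nlinarith
  linarith

end Sparse

section InexactIHT

variable {N K : ℕ} {F : Type*} [NormedAddCommGroup F] [InnerProductSpace ℝ F]
  [FiniteDimensional ℝ F] (T : EuclideanSpace ℝ (Fin N) →ₗ[ℝ] F) (b : F)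

theorem adjoint_apply_eq_zero_of_isHT {c : ℝ} (hc : c ≠ 0) {y : EuclideanSpace ℝ (Fin N)}
    (hy : IsHT K (y - c • gradient (fun y => ‖T y - b‖ ^ 2) y) y) {i : Fin N}
    (hi : y i ≠ 0) : LinearMap.adjoint T (T y - b) i = 0 := by
  have := hy.apply_eq_of_ne_zero hi
  rw [gradient_norm_apply_sub_sq, PiLp.sub_apply, eq_comm, sub_eq_self] at this
  simpa [hc] using this

theorem finite_setOf_isHT (hker : ∀ u, sparse K u → T u = 0 → u = 0) {c : ℝ} (hc : c ≠ 0) :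
    {y | IsHT K (y - c • gradient (fun y => ‖T y - b‖ ^ 2) y) y}.Finite := by
  -- Two such points with the same support differ by a sparse vector in the kernel of `T`.
  refine Set.Finite.of_finite_image (f := fun y => Finset.univ.filter fun i => y i ≠ 0)
    (Set.toFinite _) fun y hy z hz hyz => ?_
  have hsupp (i : Fin N) : y i = 0 ↔ z i = 0 :=
    not_iff_not.1 (by simpa using congrArg (i ∈ ·) hyz)
  have hsparse : sparse K (y - z) :=
    sparse_of_support_subset hy.1 fun i hi => by simp [hi, (hsupp i).1 hi]
  have hinner : inner ℝ (T (y - z)) (T (y - z)) = 0 := by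
    rw [← LinearMap.adjoint_inner_left, PiLp.inner_apply]
    refine Finset.sum_eq_zero fun i _ => ?_
    by_cases hyi : y i = 0
    · simp [hyi, (hsupp i).1 hyi]
    have hzi : z i ≠ 0 := fun h => hyi ((hsupp i).2 h)
    have hdiff : LinearMap.adjoint T (T (y - z))
        = LinearMap.adjoint T (T y - b) - LinearMap.adjoint T (T z - b) := by
      simp only [map_sub]
      abel
    rw [hdiff, PiLp.sub_apply, adjoint_apply_eq_zero_of_isHT T b hc hy hyi,
      adjoint_apply_eq_zero_of_isHT T b hc hz hzi, sub_zero, inner_zero_left]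
  exact sub_eq_zero.1 (hker _ hsparse (inner_self_eq_zero.1 hinner))

theorem norm_apply_sub_sq_add_le_of_isHT {lam L : ℝ}
    (hnorm : ∀ u, ‖T u‖ ^ 2 ≤ lam * ‖u‖ ^ 2) (hlam : 0 ≤ lam) (hL : 2 * lam < L)
    {u y e : EuclideanSpace ℝ (Fin N)} (hu : sparse K u)
    (h : IsHT K (u - (1 / L) • (gradient (fun y => ‖T y - b‖ ^ 2) u + e)) y) :
    ‖T y - b‖ ^ 2 + (L / 2 - lam) / 2 * ‖y - u‖ ^ 2
      ≤ ‖T u - b‖ ^ 2 + ‖e‖ ^ 2 / (2 * (L / 2 - lam)) := by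
  have hstep := inner_le_of_norm_sub_le (by linarith) (h.2 u hu)
  rw [inner_add_left] at hstep
  have hcs : -(‖e‖ * ‖y - u‖) ≤ inner ℝ e (y - u) :=
    neg_le_of_abs_le (abs_real_inner_le_norm e (y - u))
  have hyoung := mul_le_div_two_mul_sq_add_sq_div ‖e‖ ‖y - u‖ (show 0 < L / 2 - lam by linarith)
  rw [norm_apply_sub_sq_eq_add_inner_gradient T b u y]
  linarith [hnorm (y - u)]

theorem isHT_of_mapClusterPt {L : ℝ} {x ε : ℕ → EuclideanSpace ℝ (Fin N)}
    (hit : ∀ k, IsHT K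
      (x k - (1 / L) • (gradient (fun y => ‖T y - b‖ ^ 2) (x k) + ε k)) (x (k + 1)))
    (hstep : Tendsto (fun k => x (k + 1) - x k) atTop (𝓝 0)) (hε : Tendsto ε atTop (𝓝 0))
    {y : EuclideanSpace ℝ (Fin N)} (hy : MapClusterPt y atTop x) :
    IsHT K (y - (1 / L) • gradient (fun y => ‖T y - b‖ ^ 2) y) y := by
  obtain ⟨φ, hφ, hxφ⟩ := hy.tendsto_subseq
  have hgrad := ((continuous_gradient_norm_apply_sub_sq T b).tendsto y).comp hxφ
  refine IsHT.of_tendsto (l := atTop) (fun n => hit (φ n)) ?_ ?_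
  · simpa using hxφ.sub ((hgrad.add (hε.comp hφ.tendsto_atTop)).const_smul (1 / L))
  · simpa using hxφ.add (hstep.comp hφ.tendsto_atTop)

theorem exists_tendsto_isHT_of_inexact_iht (hker : ∀ u, sparse K u → T u = 0 → u = 0)
    {lam L : ℝ} (hnorm : ∀ u, ‖T u‖ ^ 2 ≤ lam * ‖u‖ ^ 2) (hlam : 0 ≤ lam) (hL : 2 * lam < L)
    {x ε : ℕ → EuclideanSpace ℝ (Fin N)} (h0 : sparse K (x 0))
    (hit : ∀ k, IsHT K
      (x k - (1 / L) • (gradient (fun y => ‖T y - b‖ ^ 2) (x k) + ε k)) (x (k + 1)))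
    (hsum : Summable fun k => ‖ε k‖ ^ 2) :
    ∃ p, Tendsto x atTop (𝓝 p) ∧
      IsHT K (p - (1 / L) • gradient (fun y => ‖T y - b‖ ^ 2) p) p := by
  have hc : 0 < L / 2 - lam := by linarith
  have hsparse : ∀ k, sparse K (x k) := fun
    | 0 => h0
    | k + 1 => (hit k).1
  obtain ⟨hstep, B, hB⟩ := summable_and_bddAbove_of_add_le_add
    (a := fun k => ‖T (x k) - b‖ ^ 2) (d := fun k => (L / 2 - lam) / 2 * ‖x (k + 1) - x k‖ ^ 2)
    (fun _ => by positivity) (fun _ => by positivity) (hsum.div_const _)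
    (fun _ => by positivity)
    fun k => norm_apply_sub_sq_add_le_of_isHT T b hnorm hlam hL (hsparse k) (hit k)
  replace hstep :=
    tendsto_zero_of_summable_norm_sq ((summable_mul_left_iff (by positivity)).1 hstep)
  have hx : Bornology.IsBounded (Set.range x) :=
    (isBounded_setOf_sparse_norm_apply_sub_sq_le T b hker B).subset <|
      Set.range_subset_iff.2 fun k => ⟨hsparse k, hB ⟨k, rfl⟩⟩
  have hcl (y) :=
    isHT_of_mapClusterPt T b hit hstep (tendsto_zero_of_summable_norm_sq hsum) (y := y)
  obtain ⟨p, hp, hxp⟩ := exists_tendsto_of_eventually_exists_dist_lt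
    (finite_setOf_isHT T b hker (one_div_ne_zero (by linarith)))
    (fun η hη => eventually_exists_dist_lt_of_mapClusterPt hx hcl hη)
    (by simpa [dist_eq_norm] using hstep.norm)
  exact ⟨p, hxp, hp⟩

end InexactIHT

open Matrix in
/-- Convergence of inexact IHT for compressed sensing: with `f(x) = ‖Ax - b‖²`,
`spark(A) > K`, `L > 2λ_max(AᵀA)`, and square-summable errors, the iterates
converge to an `L`-stationary point. -/
theorem stmt10 {M N : ℕ} (A : Matrix (Fin M) (Fin N) ℝ) (b : EuclideanSpace ℝ (Fin M))
    (K : ℕ)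
    (hspark : ∀ S : Finset (Fin N), S.card ≤ K →
      LinearIndependent ℝ (fun j : S => Aᵀ (j : Fin N)))
    (lam L : ℝ)
    (hlam : IsGreatest
      {μ : ℝ | Module.End.HasEigenvalue (Matrix.toEuclideanLin (Aᵀ * A)) μ} lam)
    (hL : 2 * lam < L)
    (x ε : ℕ → EuclideanSpace ℝ (Fin N))
    (h0 : sparse K (x 0))
    (hit : ∀ k, IsHT K
      (x k - (1 / L) •
        (gradient (fun y => ‖Matrix.toEuclideanLin A y - b‖ ^ 2) (x k) + ε k))
      (x (k + 1)))
    (hsum : Summable fun k => ‖ε k‖ ^ 2) :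
    ∃ xstar : EuclideanSpace ℝ (Fin N),
      Filter.Tendsto x Filter.atTop (nhds xstar) ∧
      IsHT K (xstar - (1 / L) •
        gradient (fun y => ‖Matrix.toEuclideanLin A y - b‖ ^ 2) xstar) xstar := by
  set T := Matrix.toEuclideanLin A
  have hAtA : Matrix.toEuclideanLin (Aᵀ * A) = LinearMap.adjoint T ∘ₗ T := by
    rw [← Matrix.toEuclideanLin_conjTranspose_eq_adjoint,
      Matrix.conjTranspose_eq_transpose_of_trivial]
    exact Matrix.toLpLin_mul_same _ _ _
  have hpos := T.isPositive_adjoint_comp_self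
  rw [hAtA] at hlam
  refine exists_tendsto_isHT_of_inexact_iht T b
    (fun u hu => hu.eq_zero_of_toEuclideanLin_apply_eq_zero hspark) (fun u => ?_)
    (hpos.nonneg_of_hasEigenvalue hlam.1) hL h0 hit hsum
  have := hpos.isSymmetric.inner_apply_self_le (fun μ hμ => hlam.2 hμ) u
  rwa [LinearMap.comp_apply, LinearMap.adjoint_inner_left, real_inner_self_eq_norm_sq] at this
end
end

section
/- Suppose ‖∇f_p(x)‖₂ ≤ G_p‖x‖₂ + H_p for each p, the consensus deviation bound ‖w̃^k - w̄^k‖₂ ≤ Γ γ^{s_k} Σ_p ‖∇f_p(x₁^k)‖₂ holds with γ ∈ (0,1), and s_k = ⌈(k + ‖x₁^k‖₂²)/2⌉. Then the error sequence ε^k = P(w̃^k - w̄^k) satisfies Σ_{k≥0}‖ε^k‖₂² < ∞. -/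
set_option maxHeartbeats 1000000


/-- Square-summability of the CB-DIHT consensus error: under the linear gradient growth
bound, the consensus deviation bound with rate `γ ∈ (0,1)`, and
`s_k = ⌈(k + ‖x₁^k‖²)/2⌉` consensus steps, the errors `ε^k = P(w̃^k - w̄^k)` satisfy
`Σ_k ‖ε^k‖² < ∞`. -/
theorem stmt16 {N P : ℕ} (hP : 0 < P)
    (f : Fin P → EuclideanSpace ℝ (Fin N) → ℝ)
    (G H : Fin P → ℝ) (hG : ∀ p, 0 ≤ G p) (hH : ∀ p, 0 ≤ H p)
    (hGH : ∀ p x, ‖gradient (f p) x‖ ≤ G p * ‖x‖ + H p)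
    (Γ γ : ℝ) (hΓ : 0 < Γ) (hγ : γ ∈ Set.Ioo (0 : ℝ) 1)
    (x1 wt : ℕ → EuclideanSpace ℝ (Fin N))
    (s : ℕ → ℕ) (hs : ∀ k, s k = ⌈((k : ℝ) + ‖x1 k‖ ^ 2) / 2⌉₊)
    (hdev : ∀ k, ‖wt k - (P : ℝ)⁻¹ • ∑ p, gradient (f p) (x1 k)‖ ≤
      Γ * γ ^ s k * ∑ p, ‖gradient (f p) (x1 k)‖) :
    Summable fun k =>
      ‖(P : ℝ) • (wt k - (P : ℝ)⁻¹ • ∑ p, gradient (f p) (x1 k))‖ ^ 2 := by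
  obtain ⟨hγ0, hγ1⟩ := hγ
  set A := ∑ p, G p with hA
  set B := ∑ p, H p with hB
  have hA0 : 0 ≤ A := Finset.sum_nonneg fun p _ => hG p
  have hB0 : 0 ≤ B := Finset.sum_nonneg fun p _ => hH p
  have hlog : Real.log γ < 0 := Real.log_neg hγ0 hγ1
  set c : ℝ := -Real.log γ with hc
  have hc0 : 0 < c := by simp only [hc]; linarith
  have hlogc : Real.log γ = -c := by simp [hc]
  have key : ∀ t : ℝ, 0 ≤ t →
      (A * t + B) ^ 2 * Real.exp (-(c * t ^ 2)) ≤ 2 * A ^ 2 / c + 2 * B ^ 2 := by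
    intro t ht
    have hE0 : 0 < Real.exp (-(c * t ^ 2)) := Real.exp_pos _
    have hE1 : Real.exp (-(c * t ^ 2)) ≤ 1 := by
      apply Real.exp_le_one_iff.mpr
      nlinarith [sq_nonneg t]
    have h1 : t ^ 2 * Real.exp (-(c * t ^ 2)) ≤ 1 / c := by
      rw [Real.exp_neg, ← div_eq_mul_inv, div_le_div_iff₀ (Real.exp_pos _) hc0]
      nlinarith [Real.add_one_le_exp (c * t ^ 2)]
    have e1 : (A * t + B) ^ 2 * Real.exp (-(c * t ^ 2)) ≤
        2 * (A ^ 2 * (t ^ 2 * Real.exp (-(c * t ^ 2)))) +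
        2 * (B ^ 2 * Real.exp (-(c * t ^ 2))) := by
      nlinarith [mul_nonneg (sq_nonneg (A * t - B)) hE0.le]
    have e2 : A ^ 2 * (t ^ 2 * Real.exp (-(c * t ^ 2))) ≤ A ^ 2 * (1 / c) :=
      mul_le_mul_of_nonneg_left h1 (sq_nonneg A)
    have e3 : B ^ 2 * Real.exp (-(c * t ^ 2)) ≤ B ^ 2 * 1 :=
      mul_le_mul_of_nonneg_left hE1 (sq_nonneg B)
    have : 2 * A ^ 2 / c = 2 * (A ^ 2 * (1 / c)) := by ring
    rw [this]
    nlinarith [e1, e2, e3]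
  set C : ℝ := 2 * A ^ 2 / c + 2 * B ^ 2 with hCdef
  have hC0 : 0 ≤ C := by positivity
  have hgeo : Summable fun k : ℕ => ((P : ℝ) ^ 2 * Γ ^ 2 * C) * γ ^ k :=
    (summable_geometric_of_lt_one hγ0.le hγ1).mul_left _
  refine Summable.of_nonneg_of_le (fun k => sq_nonneg _) (fun k => ?_) hgeo
  set t := ‖x1 k‖ with htdef
  have ht0 : 0 ≤ t := norm_nonneg _
  set S := ∑ p, ‖gradient (f p) (x1 k)‖ with hSdef
  have hS0 : 0 ≤ S := Finset.sum_nonneg fun p _ => norm_nonneg _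
  have hSle : S ≤ A * t + B := by
    calc S ≤ ∑ p, (G p * t + H p) := Finset.sum_le_sum fun p _ => hGH p (x1 k)
    _ = A * t + B := by rw [Finset.sum_add_distrib, ← Finset.sum_mul]
  have hd : ‖wt k - (P : ℝ)⁻¹ • ∑ p, gradient (f p) (x1 k)‖ ≤ Γ * γ ^ s k * S := hdev k
  have hsk : (k : ℝ) + t ^ 2 ≤ 2 * s k := by
    rw [hs k]
    have h := Nat.le_ceil (((k : ℝ) + t ^ 2) / 2)
    linarith
  have hgk : ∀ n : ℕ, γ ^ n = Real.exp ((n : ℝ) * Real.log γ) := fun n => by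
    rw [Real.exp_nat_mul, Real.exp_log hγ0]
  have hpow2 : (γ ^ s k) ^ 2 ≤ γ ^ k * Real.exp (-(c * t ^ 2)) := by
    rw [hgk (s k), hgk k, ← Real.exp_nat_mul, ← Real.exp_add]
    apply Real.exp_le_exp.mpr
    rw [hlogc]
    push_cast
    nlinarith [mul_le_mul_of_nonneg_left hsk hc0.le]
  have hnorm : ‖(P : ℝ) • (wt k - (P : ℝ)⁻¹ • ∑ p, gradient (f p) (x1 k))‖ =
      (P : ℝ) * ‖wt k - (P : ℝ)⁻¹ • ∑ p, gradient (f p) (x1 k)‖ := by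
    rw [norm_smul, Real.norm_natCast]
  rw [hnorm]
  set nd := ‖wt k - (P : ℝ)⁻¹ • ∑ p, gradient (f p) (x1 k)‖ with hnd
  have hnd0 : 0 ≤ nd := norm_nonneg _
  have hd' : nd ≤ Γ * γ ^ s k * S := hd
  have hrhs0 : 0 ≤ Γ * γ ^ s k * S := mul_nonneg (mul_nonneg hΓ.le (pow_nonneg hγ0.le _)) hS0
  have step1 : ((P : ℝ) * nd) ^ 2 ≤ (P : ℝ) ^ 2 * (Γ * γ ^ s k * S) ^ 2 := by
    have := pow_le_pow_left₀ hnd0 hd' 2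
    nlinarith [sq_nonneg ((P : ℝ) * nd)]
  have step2 : (γ ^ s k) ^ 2 * S ^ 2 ≤ (γ ^ k * Real.exp (-(c * t ^ 2))) * (A * t + B) ^ 2 := by
    have h2 : S ^ 2 ≤ (A * t + B) ^ 2 := pow_le_pow_left₀ hS0 hSle 2
    have h3 : 0 ≤ (γ ^ s k) ^ 2 := sq_nonneg _
    have h4 : 0 ≤ γ ^ k * Real.exp (-(c * t ^ 2)) := mul_nonneg (pow_nonneg hγ0.le _) (Real.exp_pos _).le
    calc (γ ^ s k) ^ 2 * S ^ 2 ≤ (γ ^ k * Real.exp (-(c * t ^ 2))) * S ^ 2 :=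
          mul_le_mul_of_nonneg_right hpow2 (sq_nonneg S)
      _ ≤ (γ ^ k * Real.exp (-(c * t ^ 2))) * (A * t + B) ^ 2 :=
          mul_le_mul_of_nonneg_left h2 h4
  have step3 : (A * t + B) ^ 2 * Real.exp (-(c * t ^ 2)) ≤ C := key t ht0
  have hγk0 : (0:ℝ) ≤ γ ^ k := pow_nonneg hγ0.le k
  calc ((P : ℝ) * nd) ^ 2 ≤ (P : ℝ) ^ 2 * (Γ * γ ^ s k * S) ^ 2 := step1
    _ = (P : ℝ) ^ 2 * Γ ^ 2 * ((γ ^ s k) ^ 2 * S ^ 2) := by ring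
    _ ≤ (P : ℝ) ^ 2 * Γ ^ 2 * ((γ ^ k * Real.exp (-(c * t ^ 2))) * (A * t + B) ^ 2) := by
        have h5 : 0 ≤ (P : ℝ) ^ 2 * Γ ^ 2 := mul_nonneg (sq_nonneg _) (sq_nonneg _)
        exact mul_le_mul_of_nonneg_left step2 h5
    _ = (P : ℝ) ^ 2 * Γ ^ 2 * ((A * t + B) ^ 2 * Real.exp (-(c * t ^ 2))) * γ ^ k := by ring
    _ ≤ (P : ℝ) ^ 2 * Γ ^ 2 * C * γ ^ k := by
        have h6 : 0 ≤ (P : ℝ) ^ 2 * Γ ^ 2 := mul_nonneg (sq_nonneg _) (sq_nonneg _)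
        exact mul_le_mul_of_nonneg_right (mul_le_mul_of_nonneg_left step3 h6) hγk0
end

section
/- Let x* be a K-sparse signal with measurements b = Ax* + e, where ‖A‖₂ < 1 and A satisfies the restricted isometry property of order 3K with constant δ_{3K} < 1/√32. Then the IHT iterates x^{k+1} = H_K(x^k - Aᵀ(Ax^k - b)) starting from x^0 = 0 satisfy ‖x^k - x*‖₂ ≤ 2^{-k}‖x*‖₂ + 5‖e‖₂ for all k. -/
noncomputable section

/-!
Since `x^{k+1}` is a best `K`-sparse approximation of `z = x^k - Aᵀ(Ax^k - b)` and `x*` is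
`K`-sparse, `‖x* - x^{k+1}‖² ≤ 2⟪x* - x^{k+1}, x* - z⟫`, where `x* - z = (I - AᵀA)(x* - x^k) - Aᵀe`.
Both `x* - x^{k+1}` and `x* - x^k` are supported on the union of three supports of size `K`, and
there the RIP makes the bilinear form of `I - AᵀA` at most `δ ≤ 1/4` in size. Together with
`‖A‖ ≤ 1` this gives the contraction `‖x* - x^{k+1}‖ ≤ ½‖x* - x^k‖ + 2‖e‖`, which iterates to the
bound.
-/

open Matrix
open scoped InnerProductSpace

section InnerProductSpace

variable {E F : Type*} [NormedAddCommGroup E] [InnerProductSpace ℝ E]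
  [NormedAddCommGroup F] [InnerProductSpace ℝ F]

theorem sq_norm_sub_le_two_inner_of_norm_sub_le {x y z : E} (h : ‖x - z‖ ≤ ‖y - z‖) :
    ‖y - x‖ ^ 2 ≤ 2 * ⟪y - x, y - z⟫_ℝ := by
  have hsq := pow_le_pow_left₀ (norm_nonneg _) h 2
  rw [show x - z = (y - z) - (y - x) by abel, norm_sub_sq_real, real_inner_comm] at hsq
  linarith

variable (L : E →ₗ[ℝ] F) (V : Submodule ℝ E) {δ : ℝ}
  (hV : ∀ z ∈ V, (1 - δ) * ‖z‖ ^ 2 ≤ ‖L z‖ ^ 2 ∧ ‖L z‖ ^ 2 ≤ (1 + δ) * ‖z‖ ^ 2)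
include hV

theorem abs_inner_sub_inner_map_le_of_near_isometry' {u v : E} (hu : u ∈ V) (hv : v ∈ V) :
    |⟪u, v⟫_ℝ - ⟪L u, L v⟫_ℝ| ≤ δ / 2 * (‖u‖ ^ 2 + ‖v‖ ^ 2) := by
  obtain ⟨hadd_lo, hadd_hi⟩ := hV (u + v) (V.add_mem hu hv)
  obtain ⟨hsub_lo, hsub_hi⟩ := hV (u - v) (V.sub_mem hu hv)
  rw [map_add, norm_add_sq_real, norm_add_sq_real] at hadd_lo hadd_hi
  rw [map_sub, norm_sub_sq_real, norm_sub_sq_real] at hsub_lo hsub_hi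
  rw [abs_le]
  constructor <;> nlinarith

theorem abs_inner_sub_inner_map_le_of_near_isometry {u v : E} (hu : u ∈ V) (hv : v ∈ V) :
    |⟪u, v⟫_ℝ - ⟪L u, L v⟫_ℝ| ≤ δ * ‖u‖ * ‖v‖ := by
  rcases eq_or_ne u 0 with rfl | hu0
  · simp
  rcases eq_or_ne v 0 with rfl | hv0
  · simp
  have hpos : 0 < ‖u‖ * ‖v‖ := mul_pos (norm_pos_iff.2 hu0) (norm_pos_iff.2 hv0)
  -- rescale `u` and `v` to the common norm `‖u‖ * ‖v‖`
  have h := abs_inner_sub_inner_map_le_of_near_isometry' L V hV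
    (V.smul_mem ‖v‖ hu) (V.smul_mem ‖u‖ hv)
  simp only [map_smul, real_inner_smul_left, real_inner_smul_right, norm_smul, norm_norm] at h
  rw [← mul_sub, ← mul_sub, abs_mul, abs_mul, abs_norm, abs_norm, ← mul_assoc] at h
  refine le_of_mul_le_mul_left ?_ hpos
  nlinarith

theorem norm_sub_le_half_norm_sub_add_of_gradient_step [FiniteDimensional ℝ E]
    [FiniteDimensional ℝ F] (hδ : δ ≤ 1 / 4) (hL : ∀ z, ‖L z‖ ≤ ‖z‖) {y x x' : E} {e : F}
    (hd : y - x' ∈ V) (hr : y - x ∈ V)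
    (hbest : ‖x' - (x - L.adjoint (L x - (L y + e)))‖ ≤ ‖y - (x - L.adjoint (L x - (L y + e)))‖) :
    ‖y - x'‖ ≤ ‖y - x‖ / 2 + 2 * ‖e‖ := by
  have hquad := sq_norm_sub_le_two_inner_of_norm_sub_le hbest
  rw [show y - (x - L.adjoint (L x - (L y + e))) = (y - x) - L.adjoint (L (y - x) + e) by
      simp only [map_sub, map_add]; abel,
    inner_sub_right, LinearMap.adjoint_inner_right, inner_add_right] at hquad
  have hdr := abs_inner_sub_inner_map_le_of_near_isometry L V hV hd hr
  have hδ' : δ * ‖y - x'‖ * ‖y - x‖ ≤ 1 / 4 * ‖y - x'‖ * ‖y - x‖ := by gcongr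
  have hnoise : -⟪L (y - x'), e⟫_ℝ ≤ ‖y - x'‖ * ‖e‖ :=
    (neg_le_abs _).trans <| (abs_real_inner_le_norm _ _).trans <|
      mul_le_mul_of_nonneg_right (hL _) (norm_nonneg e)
  have hquad' : ‖y - x'‖ ^ 2 ≤ ‖y - x'‖ * (‖y - x‖ / 2 + 2 * ‖e‖) := by
    linarith [le_abs_self (⟪y - x', y - x⟫_ℝ - ⟪L (y - x'), L (y - x)⟫_ℝ)]
  nlinarith [norm_nonneg (y - x'), norm_nonneg (y - x), norm_nonneg e]

end InnerProductSpace

theorem le_inv_two_pow_mul_add_of_le_half_add {a : ℕ → ℝ} {c : ℝ} (hc : 0 ≤ c)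
    (h : ∀ n, a (n + 1) ≤ a n / 2 + c) (n : ℕ) : a n ≤ (2 ^ n)⁻¹ * a 0 + 2 * c := by
  induction n with
  | zero => simp; linarith
  | succ n ih =>
    calc a (n + 1) ≤ ((2 ^ n)⁻¹ * a 0 + 2 * c) / 2 + c := by linarith [h n]
      _ = (2 ^ (n + 1))⁻¹ * a 0 + 2 * c := by ring

namespace IHT

variable {M N : ℕ}

def supportedOn (S : Finset (Fin N)) : Submodule ℝ (EuclideanSpace ℝ (Fin N)) where
  carrier := {u | ∀ i ∉ S, u i = 0}
  add_mem' hu hv i hi := by simp [hu i hi, hv i hi]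
  zero_mem' _ _ := rfl
  smul_mem' c u hu i hi := by simp [hu i hi]

def nonzeroCoords (u : EuclideanSpace ℝ (Fin N)) : Finset (Fin N) :=
  Finset.univ.filter fun i => u i ≠ 0

theorem mem_supportedOn_nonzeroCoords (u : EuclideanSpace ℝ (Fin N)) :
    u ∈ supportedOn (nonzeroCoords u) := fun i hi => by
  simpa [nonzeroCoords] using hi

theorem supportedOn_mono {S T : Finset (Fin N)} (h : S ⊆ T) : supportedOn S ≤ supportedOn T :=
  fun _ hu i hi => hu i (fun hS => hi (h hS))

theorem sparse_of_mem_supportedOn {K : ℕ} {u : EuclideanSpace ℝ (Fin N)} {S : Finset (Fin N)}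
    (hu : u ∈ supportedOn S) (hS : S.card ≤ K) : sparse K u := by
  refine (Finset.card_le_card fun i hi => ?_).trans hS
  by_contra hiS
  exact (Finset.mem_filter.1 hi).2 (hu i hiS)

theorem sparse_zero (K : ℕ) : sparse K (0 : EuclideanSpace ℝ (Fin N)) := by
  simp [sparse]

theorem exists_supportedOn_of_sparse₃ {K : ℕ} {u v w : EuclideanSpace ℝ (Fin N)}
    (hu : sparse K u) (hv : sparse K v) (hw : sparse K w) :
    ∃ T : Finset (Fin N), T.card ≤ 3 * K ∧
      u ∈ supportedOn T ∧ v ∈ supportedOn T ∧ w ∈ supportedOn T := by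
  refine ⟨nonzeroCoords u ∪ nonzeroCoords v ∪ nonzeroCoords w, ?_,
    supportedOn_mono (by intro i; simp_all) (mem_supportedOn_nonzeroCoords u),
    supportedOn_mono (by intro i; simp_all) (mem_supportedOn_nonzeroCoords v),
    supportedOn_mono (by intro i; simp_all) (mem_supportedOn_nonzeroCoords w)⟩
  have h₁ := Finset.card_union_le (nonzeroCoords u ∪ nonzeroCoords v) (nonzeroCoords w)
  have h₂ := Finset.card_union_le (nonzeroCoords u) (nonzeroCoords v)
  have h₃ : (nonzeroCoords u).card ≤ K := hu
  have h₄ : (nonzeroCoords v).card ≤ K := hv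
  have h₅ : (nonzeroCoords w).card ≤ K := hw
  omega

theorem norm_sub_iht_step_le {K : ℕ} (A : Matrix (Fin M) (Fin N) ℝ)
    {xstar x x' : EuclideanSpace ℝ (Fin N)} {e b : EuclideanSpace ℝ (Fin M)}
    (hxs : sparse K xstar) (hb : b = Matrix.toEuclideanLin A xstar + e)
    (hnorm : ‖LinearMap.toContinuousLinearMap (Matrix.toEuclideanLin A)‖ < 1)
    {δ : ℝ} (hδ : δ ≤ 1 / 4)
    (hRIP : ∀ z : EuclideanSpace ℝ (Fin N), sparse (3 * K) z →
      (1 - δ) * ‖z‖ ^ 2 ≤ ‖Matrix.toEuclideanLin A z‖ ^ 2 ∧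
      ‖Matrix.toEuclideanLin A z‖ ^ 2 ≤ (1 + δ) * ‖z‖ ^ 2)
    (hx : sparse K x)
    (hx' : IsHT K (x - Matrix.toEuclideanLin Aᵀ (Matrix.toEuclideanLin A x - b)) x') :
    ‖xstar - x'‖ ≤ ‖xstar - x‖ / 2 + 2 * ‖e‖ := by
  obtain ⟨T, hT, hxsT, hxT, hx'T⟩ := exists_supportedOn_of_sparse₃ hxs hx hx'.1
  have hbest := hx'.2 xstar hxs
  rw [hb, ← conjTranspose_eq_transpose_of_trivial, toEuclideanLin_conjTranspose_eq_adjoint]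
    at hbest
  refine norm_sub_le_half_norm_sub_add_of_gradient_step _ (supportedOn T)
    (fun z hz => hRIP z (sparse_of_mem_supportedOn hz hT)) hδ (fun z => ?_)
    ((supportedOn T).sub_mem hxsT hx'T) ((supportedOn T).sub_mem hxsT hxT) hbest
  simpa using (LinearMap.toContinuousLinearMap (Matrix.toEuclideanLin A)).le_of_opNorm_le
    hnorm.le z

end IHT

open IHT in
open Matrix in
theorem stmt18_general {M N : ℕ} (K : ℕ) (A : Matrix (Fin M) (Fin N) ℝ)
    (xstar : EuclideanSpace ℝ (Fin N)) (e b : EuclideanSpace ℝ (Fin M))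
    (hxs : sparse K xstar)
    (hb : b = Matrix.toEuclideanLin A xstar + e)
    (hnorm : ‖LinearMap.toContinuousLinearMap (Matrix.toEuclideanLin A)‖ < 1)
    (δ : ℝ) (hδ : δ < 1 / Real.sqrt 32)
    (hRIP : ∀ z : EuclideanSpace ℝ (Fin N), sparse (3 * K) z →
      (1 - δ) * ‖z‖ ^ 2 ≤ ‖Matrix.toEuclideanLin A z‖ ^ 2 ∧
      ‖Matrix.toEuclideanLin A z‖ ^ 2 ≤ (1 + δ) * ‖z‖ ^ 2)
    (x : ℕ → EuclideanSpace ℝ (Fin N)) (h0 : x 0 = 0)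
    (hit : ∀ k, IsHT K
      (x k - Matrix.toEuclideanLin Aᵀ (Matrix.toEuclideanLin A (x k) - b))
      (x (k + 1))) :
    ∀ k : ℕ, ‖x k - xstar‖ ≤ ((2 : ℝ) ^ k)⁻¹ * ‖xstar‖ + 5 * ‖e‖ := by
  have hδ' : δ ≤ 1 / 4 :=
    hδ.le.trans (one_div_le_one_div_of_le (by norm_num) (Real.le_sqrt_of_sq_le (by norm_num)))
  have hsparse : ∀ k, sparse K (x k)
    | 0 => h0 ▸ sparse_zero K
    | k + 1 => (hit k).1
  intro k
  have h := le_inv_two_pow_mul_add_of_le_half_add (a := fun n => ‖xstar - x n‖)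
    (mul_nonneg zero_le_two (norm_nonneg e))
    (fun n => norm_sub_iht_step_le A hxs hb hnorm hδ' hRIP (hsparse n) (hit n)) k
  rw [h0, sub_zero, norm_sub_rev] at h
  linarith [norm_nonneg e]

open Matrix in
/-- IHT recovery guarantee under the RIP: if `b = Ax* + e` with `x*` `K`-sparse,
`‖A‖₂ < 1`, and `A` satisfies the RIP of order `3K` with constant `δ_{3K} < 1/√32`,
then the IHT iterates `x^{k+1} = H_K(x^k - Aᵀ(Ax^k - b))` started at `x^0 = 0` satisfy
`‖x^k - x*‖ ≤ 2^{-k}‖x*‖ + 5‖e‖`. -/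
theorem stmt18 {M N : ℕ} (K : ℕ) (A : Matrix (Fin M) (Fin N) ℝ)
    (xstar : EuclideanSpace ℝ (Fin N)) (e b : EuclideanSpace ℝ (Fin M))
    (hxs : sparse K xstar)
    (hb : b = Matrix.toEuclideanLin A xstar + e)
    (hnorm : ‖LinearMap.toContinuousLinearMap (Matrix.toEuclideanLin A)‖ < 1)
    (δ : ℝ) (hδ0 : 0 ≤ δ) (hδ : δ < 1 / Real.sqrt 32)
    (hRIP : ∀ z : EuclideanSpace ℝ (Fin N), sparse (3 * K) z →
      (1 - δ) * ‖z‖ ^ 2 ≤ ‖Matrix.toEuclideanLin A z‖ ^ 2 ∧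
      ‖Matrix.toEuclideanLin A z‖ ^ 2 ≤ (1 + δ) * ‖z‖ ^ 2)
    (x : ℕ → EuclideanSpace ℝ (Fin N)) (h0 : x 0 = 0)
    (hit : ∀ k, IsHT K
      (x k - Matrix.toEuclideanLin Aᵀ (Matrix.toEuclideanLin A (x k) - b))
      (x (k + 1))) :
    ∀ k : ℕ, ‖x k - xstar‖ ≤ ((2 : ℝ) ^ k)⁻¹ * ‖xstar‖ + 5 * ‖e‖ :=
  stmt18_general K A xstar e b hxs hb hnorm δ hδ hRIP x h0 hit
end
end
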